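/- Let f : V → W be a linear map of finite-dimensional real vector spaces. If L ≤ V ⊕ V* is maximal isotropic, then the pushforward f_*L = {f(X) + η ∈ W ⊕ W* : X + f*(η) ∈ L} is a maximal isotropic subspace of W ⊕ W*. Dually, if M ≤ W ⊕ W* is maximal isotropic, then the pullback f*M = {X + f*(η) ∈ V ⊕ V* : f(X) + η ∈ M} is a maximal isotropic subspace of V ⊕ V*. -/

import Mathlib

open Module

/-- The canonical symmetric bilinear form on `V ⊕ V*`,
`⟨X+ξ, Y+η⟩ = (1/2)(ξ(Y) + η(X))`. -/
noncomputable def canForm (V : Type*) [AddCommGroup V] [Module ℝ V] :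
    LinearMap.BilinForm ℝ (V × Module.Dual ℝ V) :=
  LinearMap.mk₂ ℝ (fun p q => (p.2 q.1 + q.2 p.1) / 2)
    (fun p p' q => by simp; ring)
    (fun c p q => by simp; ring)
    (fun p q q' => by simp; ring)
    (fun c p q => by simp; ring)

/-- The pushforward `f_*L = {f(X) + η : X + f*(η) ∈ L}` of a Dirac structure
along a linear map `f : V → W`. -/
noncomputable def diracPush {V W : Type*} [AddCommGroup V] [Module ℝ V]
    [AddCommGroup W] [Module ℝ W] (f : V →ₗ[ℝ] W)
    (L : Submodule ℝ (V × Module.Dual ℝ V)) :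
    Submodule ℝ (W × Module.Dual ℝ W) where
  carrier := {p | ∃ X : V, (X, f.dualMap p.2) ∈ L ∧ p.1 = f X}
  add_mem' := by
    rintro p q ⟨X, hX, hpX⟩ ⟨Y, hY, hqY⟩
    refine ⟨X + Y, ?_, by simp [hpX, hqY, map_add]⟩
    have : ((X + Y, f.dualMap (p + q).2) : V × Module.Dual ℝ V) =
        (X, f.dualMap p.2) + (Y, f.dualMap q.2) := by
      simp [Prod.ext_iff, map_add]
    rw [this]
    exact L.add_mem hX hY
  zero_mem' := by
    refine ⟨0, ?_, by simp⟩
    have : ((0, f.dualMap (0 : W × Module.Dual ℝ W).2) : V × Module.Dual ℝ V) = 0 := by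
      simp [Prod.ext_iff]
    rw [this]
    exact L.zero_mem
  smul_mem' := by
    rintro c p ⟨X, hX, hpX⟩
    refine ⟨c • X, ?_, by simp [hpX, map_smul]⟩
    have : ((c • X, f.dualMap (c • p).2) : V × Module.Dual ℝ V) =
        c • (X, f.dualMap p.2) := by
      simp [Prod.ext_iff, map_smul]
    rw [this]
    exact L.smul_mem c hX

/-- The pullback `f*M = {X + f*(η) : f(X) + η ∈ M}` of a Dirac structure
along a linear map `f : V → W`. -/
noncomputable def diracPull {V W : Type*} [AddCommGroup V] [Module ℝ V]
    [AddCommGroup W] [Module ℝ W] (f : V →ₗ[ℝ] W)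
    (M : Submodule ℝ (W × Module.Dual ℝ W)) :
    Submodule ℝ (V × Module.Dual ℝ V) where
  carrier := {q | ∃ η : Module.Dual ℝ W, (f q.1, η) ∈ M ∧ q.2 = f.dualMap η}
  add_mem' := by
    rintro p q ⟨η, hη, hpη⟩ ⟨ζ, hζ, hqζ⟩
    refine ⟨η + ζ, ?_, by simp [hpη, hqζ, map_add]⟩
    have : ((f (p + q).1, η + ζ) : W × Module.Dual ℝ W) = (f p.1, η) + (f q.1, ζ) := by
      simp [Prod.ext_iff, map_add]
    rw [this]
    exact M.add_mem hη hζ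
  zero_mem' := by
    refine ⟨0, ?_, by simp⟩
    have : ((f (0 : V × Module.Dual ℝ V).1, 0) : W × Module.Dual ℝ W) = 0 := by
      simp [Prod.ext_iff]
    rw [this]
    exact M.zero_mem
  smul_mem' := by
    rintro c p ⟨η, hη, hpη⟩
    refine ⟨c • η, ?_, by simp [hpη, map_smul]⟩
    have : ((f (c • p).1, c • η) : W × Module.Dual ℝ W) = c • (f p.1, η) := by
      simp [Prod.ext_iff, map_smul]
    rw [this]
    exact M.smul_mem c hη

section Helpers

open LinearMap Submodule

lemma canForm_apply {V : Type*} [AddCommGroup V] [Module ℝ V] (p q : V × Dual ℝ V) :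
    canForm V p q = (p.2 q.1 + q.2 p.1) / 2 := rfl

lemma canForm_isRefl {V : Type*} [AddCommGroup V] [Module ℝ V] : (canForm V).IsRefl := by
  intro p q h
  rw [canForm_apply] at h ⊢
  linarith

lemma canForm_nondeg {V : Type*} [AddCommGroup V] [Module ℝ V] [FiniteDimensional ℝ V] :
    (canForm V).Nondegenerate := by
  refine (LinearMap.IsRefl.nondegenerate_iff_separatingLeft
    (show LinearMap.IsRefl (canForm V) from canForm_isRefl)).mpr ?_
  intro p hp
  have h1 : p.1 = 0 := by
    rw [← Module.forall_dual_apply_eq_zero_iff ℝ p.1]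
    intro φ
    have h := hp (0, φ)
    rw [canForm_apply] at h
    simpa using h
  have h2 : p.2 = 0 := by
    ext Y
    have h := hp (Y, 0)
    rw [canForm_apply] at h
    simpa using h
  exact Prod.ext h1 h2

lemma finrank_prod_dual (V : Type*) [AddCommGroup V] [Module ℝ V] [FiniteDimensional ℝ V] :
    finrank ℝ (V × Dual ℝ V) = finrank ℝ V + finrank ℝ V := by
  rw [Module.finrank_prod, Subspace.dual_finrank_eq]

lemma finrank_map_inj {U E : Type*} [AddCommGroup U] [Module ℝ U] [AddCommGroup E] [Module ℝ E]
    (g : U →ₗ[ℝ] E) (hg : Function.Injective g) (p : Submodule ℝ U) :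
    finrank ℝ (p.map g) = finrank ℝ p :=
  (p.equivMapOfInjective g hg).finrank_eq.symm

lemma finrank_map_add {U E : Type*} [AddCommGroup U] [Module ℝ U] [AddCommGroup E] [Module ℝ E]
    [FiniteDimensional ℝ U] (g : U →ₗ[ℝ] E) (p : Submodule ℝ U) :
    finrank ℝ (p.map g) + finrank ℝ (p ⊓ LinearMap.ker g : Submodule ℝ U) = finrank ℝ p := by
  have h := LinearMap.finrank_range_add_finrank_ker (g.comp p.subtype)
  rw [LinearMap.range_comp, Submodule.range_subtype, LinearMap.ker_comp,
    ← Submodule.finrank_map_subtype_eq p (Submodule.comap p.subtype (LinearMap.ker g)),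
    Submodule.map_comap_subtype] at h
  exact h

lemma finrank_comap_add {U E : Type*} [AddCommGroup U] [Module ℝ U] [AddCommGroup E] [Module ℝ E]
    [FiniteDimensional ℝ U] (g : U →ₗ[ℝ] E) (N : Submodule ℝ E) :
    finrank ℝ (N.comap g) =
      finrank ℝ (LinearMap.range g ⊓ N : Submodule ℝ E) + finrank ℝ (LinearMap.ker g) := by
  have h := finrank_map_add g (N.comap g)
  have hle : LinearMap.ker g ≤ N.comap g := fun x hx => by
    simp [Submodule.mem_comap, LinearMap.mem_ker.mp hx]
  rw [Submodule.map_comap_eq, inf_eq_right.mpr hle] at h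
  omega

lemma orth_sup {E : Type*} [AddCommGroup E] [Module ℝ E] (B : LinearMap.BilinForm ℝ E)
    (p q : Submodule ℝ E) :
    B.orthogonal (p ⊔ q) = B.orthogonal p ⊓ B.orthogonal q := by
  ext x
  simp only [Submodule.mem_inf, LinearMap.BilinForm.mem_orthogonal_iff,
    LinearMap.BilinForm.isOrtho_def]
  constructor
  · exact fun h => ⟨fun n hn => h n (Submodule.mem_sup_left hn),
      fun n hn => h n (Submodule.mem_sup_right hn)⟩
  · rintro ⟨h1, h2⟩ n hn
    obtain ⟨a, ha, b, hb, rfl⟩ := Submodule.mem_sup.mp hn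
    simp [map_add, LinearMap.add_apply, h1 a ha, h2 b hb]

lemma isotropic_orth_eq {V : Type*} [AddCommGroup V] [Module ℝ V] [FiniteDimensional ℝ V]
    {L : Submodule ℝ (V × Dual ℝ V)}
    (hiso : ∀ p ∈ L, ∀ q ∈ L, canForm V p q = 0)
    (hdim : finrank ℝ L = finrank ℝ V) :
    (canForm V).orthogonal L = L := by
  have hle : L ≤ (canForm V).orthogonal L := fun q hq p hp => hiso p hp q hq
  refine (Submodule.eq_of_le_of_finrank_le hle ?_).symm
  rw [LinearMap.BilinForm.finrank_orthogonal canForm_nondeg,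
    finrank_prod_dual, hdim]
  omega

end Helpers

lemma mem_diracPush {V W : Type*} [AddCommGroup V] [Module ℝ V]
    [AddCommGroup W] [Module ℝ W] (f : V →ₗ[ℝ] W)
    (L : Submodule ℝ (V × Module.Dual ℝ V)) (p : W × Module.Dual ℝ W) :
    p ∈ diracPush f L ↔ ∃ X : V, (X, f.dualMap p.2) ∈ L ∧ p.1 = f X := Iff.rfl

lemma mem_diracPull {V W : Type*} [AddCommGroup V] [Module ℝ V]
    [AddCommGroup W] [Module ℝ W] (f : V →ₗ[ℝ] W)
    (M : Submodule ℝ (W × Module.Dual ℝ W)) (q : V × Module.Dual ℝ V) :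
    q ∈ diracPull f M ↔ ∃ η : Module.Dual ℝ W, (f q.1, η) ∈ M ∧ q.2 = f.dualMap η := Iff.rfl


set_option maxHeartbeats 2000000 in
/-- Pushforward and pullback of maximal isotropics (linear Dirac structures)
along a linear map `f : V → W` are again maximal isotropic. -/
theorem diracPush_diracPull_maximal_isotropic
    {V W : Type*} [AddCommGroup V] [Module ℝ V] [FiniteDimensional ℝ V]
    [AddCommGroup W] [Module ℝ W] [FiniteDimensional ℝ W] (f : V →ₗ[ℝ] W) :
    (∀ L : Submodule ℝ (V × Module.Dual ℝ V),
      (∀ p ∈ L, ∀ q ∈ L, canForm V p q = 0) →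
      Module.finrank ℝ L = Module.finrank ℝ V →
      (∀ p ∈ diracPush f L, ∀ q ∈ diracPush f L, canForm W p q = 0) ∧
        Module.finrank ℝ (diracPush f L) = Module.finrank ℝ W) ∧
    (∀ M : Submodule ℝ (W × Module.Dual ℝ W),
      (∀ p ∈ M, ∀ q ∈ M, canForm W p q = 0) →
      Module.finrank ℝ M = Module.finrank ℝ W →
      (∀ p ∈ diracPull f M, ∀ q ∈ diracPull f M, canForm V p q = 0) ∧
        Module.finrank ℝ (diracPull f M) = Module.finrank ℝ V) := by
  have hVW : Module.finrank ℝ (V × Module.Dual ℝ W) =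
      Module.finrank ℝ V + Module.finrank ℝ W := by
    rw [Module.finrank_prod, Subspace.dual_finrank_eq]
  set g₁ : (V × Module.Dual ℝ W) →ₗ[ℝ] (V × Module.Dual ℝ V) :=
    LinearMap.prodMap LinearMap.id f.dualMap with hg₁
  set g₂ : (V × Module.Dual ℝ W) →ₗ[ℝ] (W × Module.Dual ℝ W) :=
    LinearMap.prodMap f LinearMap.id with hg₂
  have hg₁app : ∀ u : V × Module.Dual ℝ W, g₁ u = (u.1, f.dualMap u.2) := fun u => rfl
  have hg₂app : ∀ u : V × Module.Dual ℝ W, g₂ u = (f u.1, u.2) := fun u => rfl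
  have hA := LinearMap.finrank_range_add_finrank_ker g₁
  have hA' := LinearMap.finrank_range_add_finrank_ker g₂
  rw [hVW] at hA hA'
  constructor
  · -- pushforward
    intro L hiso hdim
    constructor
    · rintro ⟨p1, p2⟩ hp ⟨q1, q2⟩ hq
      obtain ⟨X, hX, rfl⟩ := (mem_diracPush f L _).mp hp
      obtain ⟨Y, hY, rfl⟩ := (mem_diracPush f L _).mp hq
      have h := hiso _ hX _ hY
      rw [canForm_apply] at h ⊢
      simpa using h
    · set S := L.comap g₁ with hS
      have hpush : diracPush f L = S.map g₂ := by
        ext p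
        rw [mem_diracPush]
        constructor
        · rintro ⟨X, hX, hp⟩
          refine ⟨(X, p.2), ?_, ?_⟩
          · show g₁ (X, p.2) ∈ L
            rw [hg₁app]
            exact hX
          · rw [hg₂app]
            exact Prod.ext_iff.mpr ⟨hp.symm, rfl⟩
        · rintro ⟨⟨X, η⟩, hmem, rfl⟩
          refine ⟨X, ?_, rfl⟩
          have : g₁ (X, η) ∈ L := hmem
          rwa [hg₁app] at this
      set K0 := LinearMap.ker f ⊓ L.comap (LinearMap.inl ℝ V (Module.Dual ℝ V)) with hK0
      have hker2 : S ⊓ LinearMap.ker g₂ = K0.map (LinearMap.inl ℝ V (Module.Dual ℝ W)) := by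
        ext ⟨X, η⟩
        simp only [Submodule.mem_inf, Submodule.mem_comap, LinearMap.mem_ker, hS, hK0,
          Submodule.mem_map, LinearMap.inl_apply, Prod.mk.injEq, hg₁app, hg₂app,
          Prod.mk_eq_zero]
        constructor
        · rintro ⟨hs, h1, rfl⟩
          exact ⟨X, ⟨h1, by simpa using hs⟩, rfl, rfl⟩
        · rintro ⟨Z, ⟨h1, h2⟩, rfl, rfl⟩
          exact ⟨by simpa using h2, h1, rfl⟩
      have horth : (canForm V).orthogonal (LinearMap.range g₁) =
          (LinearMap.ker f).map (LinearMap.inl ℝ V (Module.Dual ℝ V)) := by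
        ext ⟨Y, η⟩
        constructor
        · intro h
          have hη : η = 0 := by
            ext X
            have h0 := h (g₁ (X, 0)) (LinearMap.mem_range_self g₁ (X, 0))
            rw [canForm_apply, hg₁app] at h0
            simpa using h0
          have hY : f Y = 0 := by
            rw [← Module.forall_dual_apply_eq_zero_iff ℝ (f Y)]
            intro ζ
            have h0 := h (g₁ (0, ζ)) (LinearMap.mem_range_self g₁ (0, ζ))
            rw [canForm_apply, hg₁app] at h0
            simpa using h0
          exact ⟨Y, LinearMap.mem_ker.mpr hY, by simp [hη]⟩
        · rintro ⟨Z, hZ, hZeq⟩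
          obtain ⟨rfl, rfl⟩ : Z = Y ∧ (0 : Module.Dual ℝ V) = η := by
            simpa [Prod.ext_iff] using hZeq
          rintro p ⟨u, rfl⟩
          rw [canForm_apply, hg₁app]
          simp [LinearMap.mem_ker.mp hZ]
      have hLK : L ⊓ (LinearMap.ker f).map (LinearMap.inl ℝ V (Module.Dual ℝ V)) =
          K0.map (LinearMap.inl ℝ V (Module.Dual ℝ V)) := by
        ext ⟨Y, η⟩
        simp only [Submodule.mem_inf, Submodule.mem_map, LinearMap.mem_ker, hK0,
          Submodule.mem_comap, LinearMap.inl_apply, Prod.mk.injEq]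
        constructor
        · rintro ⟨hL, Z, hZ, rfl, rfl⟩
          exact ⟨Z, ⟨hZ, hL⟩, rfl, rfl⟩
        · rintro ⟨Z, ⟨hZ, hL⟩, rfl, rfl⟩
          exact ⟨hL, Z, hZ, rfl, rfl⟩
      have horthsup : (canForm V).orthogonal (L ⊔ LinearMap.range g₁) =
          K0.map (LinearMap.inl ℝ V (Module.Dual ℝ V)) := by
        rw [orth_sup, isotropic_orth_eq hiso hdim, horth, hLK]
      have e1 := finrank_map_add g₂ S
      have e2 := finrank_comap_add g₁ L
      rw [← hS] at e2
      have e3 : finrank ℝ (S ⊓ LinearMap.ker g₂ : Submodule ℝ (V × Module.Dual ℝ W)) =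
          finrank ℝ K0 := by
        rw [hker2, finrank_map_inj _ LinearMap.inl_injective]
      have e5 := Submodule.finrank_sup_add_finrank_inf_eq L (LinearMap.range g₁)
      rw [inf_comm (LinearMap.range g₁) L] at e2
      have e6 : finrank ℝ (L ⊔ LinearMap.range g₁ : Submodule ℝ (V × Module.Dual ℝ V)) +
          finrank ℝ K0 = finrank ℝ V + finrank ℝ V := by
        have h := LinearMap.BilinForm.finrank_orthogonal (canForm_nondeg (V := V))
          (L ⊔ LinearMap.range g₁)
        rw [horthsup, finrank_map_inj _ LinearMap.inl_injective, finrank_prod_dual] at h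
        have hle := Submodule.finrank_le (L ⊔ LinearMap.range g₁)
        rw [finrank_prod_dual] at hle
        omega
      rw [hpush]
      omega
  · -- pullback
    intro M hiso hdim
    constructor
    · rintro ⟨p1, p2⟩ hp ⟨q1, q2⟩ hq
      obtain ⟨η, hη, rfl⟩ := (mem_diracPull f M _).mp hp
      obtain ⟨ζ, hζ, rfl⟩ := (mem_diracPull f M _).mp hq
      have h := hiso _ hη _ hζ
      rw [canForm_apply] at h ⊢
      simpa using h
    · set S := M.comap g₂ with hS
      have hpull : diracPull f M = S.map g₁ := by
        ext p
        rw [mem_diracPull]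
        constructor
        · rintro ⟨η, hη, hp⟩
          refine ⟨(p.1, η), ?_, ?_⟩
          · show g₂ (p.1, η) ∈ M
            rw [hg₂app]
            exact hη
          · rw [hg₁app]
            exact Prod.ext_iff.mpr ⟨rfl, hp.symm⟩
        · rintro ⟨⟨X, η⟩, hmem, rfl⟩
          refine ⟨η, ?_, rfl⟩
          have : g₂ (X, η) ∈ M := hmem
          rwa [hg₂app] at this
      set K0 := LinearMap.ker f.dualMap ⊓ M.comap (LinearMap.inr ℝ W (Module.Dual ℝ W))
        with hK0
      have hker1 : S ⊓ LinearMap.ker g₁ = K0.map (LinearMap.inr ℝ V (Module.Dual ℝ W)) := by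
        ext ⟨X, η⟩
        simp only [Submodule.mem_inf, Submodule.mem_comap, LinearMap.mem_ker, hS, hK0,
          Submodule.mem_map, LinearMap.inr_apply, Prod.mk.injEq, hg₁app, hg₂app,
          Prod.mk_eq_zero]
        constructor
        · rintro ⟨hs, rfl, h2⟩
          exact ⟨η, ⟨h2, by simpa using hs⟩, rfl, rfl⟩
        · rintro ⟨ξ, ⟨h1, h2⟩, rfl, rfl⟩
          exact ⟨by simpa using h2, rfl, h1⟩
      have horth : (canForm W).orthogonal (LinearMap.range g₂) =
          (LinearMap.ker f.dualMap).map (LinearMap.inr ℝ W (Module.Dual ℝ W)) := by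
        ext ⟨Z, η⟩
        constructor
        · intro h
          have hZ : Z = 0 := by
            rw [← Module.forall_dual_apply_eq_zero_iff ℝ Z]
            intro ζ
            have h0 := h (g₂ (0, ζ)) (LinearMap.mem_range_self g₂ (0, ζ))
            rw [canForm_apply, hg₂app] at h0
            simpa using h0
          have hη : f.dualMap η = 0 := by
            ext X
            have h0 := h (g₂ (X, 0)) (LinearMap.mem_range_self g₂ (X, 0))
            rw [canForm_apply, hg₂app] at h0
            simpa using h0
          exact ⟨η, LinearMap.mem_ker.mpr hη, by simp [hZ]⟩
        · rintro ⟨ξ, hξ, hξeq⟩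
          obtain ⟨rfl, rfl⟩ : (0 : W) = Z ∧ ξ = η := by
            simpa [Prod.ext_iff] using hξeq
          rintro p ⟨u, rfl⟩
          rw [canForm_apply, hg₂app]
          have : ξ (f u.1) = 0 := by
            have := LinearMap.congr_fun (LinearMap.mem_ker.mp hξ) u.1
            simpa using this
          simp [this]
      have hMK : M ⊓ (LinearMap.ker f.dualMap).map (LinearMap.inr ℝ W (Module.Dual ℝ W)) =
          K0.map (LinearMap.inr ℝ W (Module.Dual ℝ W)) := by
        ext ⟨Z, η⟩
        simp only [Submodule.mem_inf, Submodule.mem_map, LinearMap.mem_ker, hK0,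
          Submodule.mem_comap, LinearMap.inr_apply, Prod.mk.injEq]
        constructor
        · rintro ⟨hM, ξ, hξ, rfl, rfl⟩
          exact ⟨ξ, ⟨hξ, hM⟩, rfl, rfl⟩
        · rintro ⟨ξ, ⟨hξ, hM⟩, rfl, rfl⟩
          exact ⟨hM, ξ, hξ, rfl, rfl⟩
      have horthsup : (canForm W).orthogonal (M ⊔ LinearMap.range g₂) =
          K0.map (LinearMap.inr ℝ W (Module.Dual ℝ W)) := by
        rw [orth_sup, isotropic_orth_eq hiso hdim, horth, hMK]
      have e1 := finrank_map_add g₁ S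
      have e2 := finrank_comap_add g₂ M
      rw [← hS] at e2
      have e3 : finrank ℝ (S ⊓ LinearMap.ker g₁ : Submodule ℝ (V × Module.Dual ℝ W)) =
          finrank ℝ K0 := by
        rw [hker1, finrank_map_inj _ LinearMap.inr_injective]
      have e5 := Submodule.finrank_sup_add_finrank_inf_eq M (LinearMap.range g₂)
      rw [inf_comm (LinearMap.range g₂) M] at e2
      have e6 : finrank ℝ (M ⊔ LinearMap.range g₂ : Submodule ℝ (W × Module.Dual ℝ W)) +
          finrank ℝ K0 = finrank ℝ W + finrank ℝ W := by
        have h := LinearMap.BilinForm.finrank_orthogonal (canForm_nondeg (V := W))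
          (M ⊔ LinearMap.range g₂)
        rw [horthsup, finrank_map_inj _ LinearMap.inr_injective, finrank_prod_dual] at h
        have hle := Submodule.finrank_le (M ⊔ LinearMap.range g₂)
        rw [finrank_prod_dual] at hle
        omega
      rw [hpull]
      omega
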